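/- arXiv:2211.16683 — 4 statements merged into one kernel-verified Lean document; each statement's English description precedes it below -/
import Mathlib

section
/- Under the setting of the previous statement, if the sampling probabilities satisfy $\pi_i \ge \beta \frac{\|A_{(:,i)}\|_2 \|B_{(i,:)}\|_2}{\sum_{j=1}^n \|A_{(:,j)}\|_2 \|B_{(j,:)}\|_2}$ for some $\beta \in (0,1]$ (and the denominator is positive), then $\mathbf{E}[\|AB - M\|_F^2] \le \frac{1}{\beta \tau}\|A\|_F^2 \|B\|_F^2$. -/
/-!
Under the weight `∏ u, π (ω u)` the coordinates of `ω` are independent draws from `π`. Entrywise,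
`A * B - M ω` is `τ⁻¹` times a sum of `τ` independent copies of the centred variable
`(A * B) i j - A i k * B k j / π k`, so the cross terms vanish in expectation and the mean square
error is `τ⁻¹` times its variance, which is at most the second moment `∑ k, |A i k * B k j|² / π k`.
Summing over the entries leaves `τ⁻¹ ∑ k, (a k b k)² / π k`, with `a k`, `b k` the norms of the
`k`-th column of `A` and row of `B`; the lower bound on `π k` bounds this by
`(∑ k, a k b k)² / (β τ)`, and Cauchy–Schwarz gives `(∑ k, a k b k)² ≤ ‖A‖_F² ‖B‖_F²`.
-/

open Finset

section ProductWeights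

variable {ι κ R : Type*} [Fintype ι] [DecidableEq ι] [Fintype κ] [CommSemiring R] (π : κ → R)

theorem sum_pi_prod_mul_prod (F : ι → κ → R) :
    ∑ ω : ι → κ, (∏ u, π (ω u)) * ∏ u, F u (ω u) = ∏ u, ∑ k, π k * F u k := by
  simp only [Fintype.prod_sum, prod_mul_distrib]

variable {π}

theorem sum_pi_prod_mul_apply (hπ : ∑ k, π k = 1) (t : ι) (G : κ → R) :
    ∑ ω : ι → κ, (∏ u, π (ω u)) * G (ω t) = ∑ k, π k * G k := by
  have h := sum_pi_prod_mul_prod π fun u k => if u = t then G k else 1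
  simpa only [prod_ite_eq', mem_univ, if_true, mul_ite, mul_one, sum_ite_irrel, hπ] using h

theorem sum_pi_prod_mul_apply_mul_apply (hπ : ∑ k, π k = 1) {t s : ι} (hts : t ≠ s)
    (G H : κ → R) :
    ∑ ω : ι → κ, (∏ u, π (ω u)) * (G (ω t) * H (ω s)) =
      (∑ k, π k * G k) * ∑ k, π k * H k := by
  have h := sum_pi_prod_mul_prod π fun u k =>
    (if u = t then G k else 1) * (if u = s then H k else 1)
  have hfactor : ∀ u, ∑ k, π k * ((if u = t then G k else 1) * (if u = s then H k else 1)) =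
      (if u = t then ∑ k, π k * G k else 1) * (if u = s then ∑ k, π k * H k else 1) := by
    intro u
    by_cases hut : u = t
    · simp [hut, hts]
    · by_cases hus : u = s <;> simp [hut, hus, hts.symm, hπ]
  simpa only [hfactor, prod_mul_distrib, prod_ite_eq', mem_univ, if_true] using h

end ProductWeights

theorem sum_pi_prod_mul_norm_sum_sq {ι κ 𝕜 : Type*} [Fintype ι] [DecidableEq ι] [Fintype κ]
    [RCLike 𝕜] {π : κ → ℝ} (hπ : ∑ k, π k = 1) {f : κ → 𝕜} (hf : ∑ k, π k • f k = 0) :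
    ∑ ω : ι → κ, (∏ u, π (ω u)) * ‖∑ t, f (ω t)‖ ^ 2 =
      Fintype.card ι * ∑ k, π k * ‖f k‖ ^ 2 := by
  have hπ' : ∑ k, (π k : 𝕜) = 1 := by exact_mod_cast hπ
  have hf' : ∑ k, (π k : 𝕜) * f k = 0 := by simpa only [RCLike.real_smul_eq_coe_mul] using hf
  have hpair : ∀ t s : ι, ∑ ω : ι → κ, (∏ u, (π (ω u) : 𝕜)) * (f (ω t) * star (f (ω s))) =
      if t = s then ∑ k, (π k : 𝕜) * (f k * star (f k)) else 0 := by
    intro t s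
    split_ifs with hts
    · subst hts
      exact sum_pi_prod_mul_apply hπ' t fun k => f k * star (f k)
    · exact (sum_pi_prod_mul_apply_mul_apply hπ' hts f (star ∘ f)).trans (by rw [hf', zero_mul])
  apply RCLike.ofReal_injective (K := 𝕜)
  push_cast
  simp only [← RCLike.star_def, ← RCLike.mul_conj, star_sum]
  calc ∑ ω : ι → κ, (∏ u, (π (ω u) : 𝕜)) * ((∑ t, f (ω t)) * ∑ s, star (f (ω s)))
      = ∑ s, ∑ t, ∑ ω : ι → κ, (∏ u, (π (ω u) : 𝕜)) * (f (ω t) * star (f (ω s))) := by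
        simp only [sum_mul, mul_sum]
        rw [sum_comm]
        exact sum_congr rfl fun s _ => sum_comm
    _ = Fintype.card ι * ∑ k, (π k : 𝕜) * (f k * star (f k)) := by
        simp only [hpair, sum_ite_eq', mem_univ, if_true, sum_const, card_univ, nsmul_eq_mul]

theorem sum_mul_norm_sub_sq_eq {κ E : Type*} [Fintype κ] [NormedAddCommGroup E]
    [InnerProductSpace ℝ E] {π : κ → ℝ} (hπ : ∑ k, π k = 1) (Y : κ → E) :
    ∑ k, π k * ‖∑ j, π j • Y j - Y k‖ ^ 2 = ∑ k, π k * ‖Y k‖ ^ 2 - ‖∑ j, π j • Y j‖ ^ 2 := by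
  set D := ∑ j, π j • Y j
  have hcross : ∑ k, π k * (2 * inner ℝ D (Y k)) = 2 * ‖D‖ ^ 2 := by
    calc ∑ k, π k * (2 * inner ℝ D (Y k)) = 2 * inner ℝ D D := by
          rw [inner_sum, mul_sum]
          exact sum_congr rfl fun k _ => by rw [inner_smul_right]; ring
      _ = 2 * ‖D‖ ^ 2 := by rw [real_inner_self_eq_norm_sq]
  simp only [norm_sub_sq_real, mul_add, mul_sub, sum_add_distrib, sum_sub_distrib, ← sum_mul, hπ]
  rw [hcross]
  ring

theorem sum_mul_norm_sub_sq_le {κ E : Type*} [Fintype κ] [NormedAddCommGroup E]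
    [InnerProductSpace ℝ E] {π : κ → ℝ} (hπ : ∑ k, π k = 1) (Y : κ → E) :
    ∑ k, π k * ‖∑ j, π j • Y j - Y k‖ ^ 2 ≤ ∑ k, π k * ‖Y k‖ ^ 2 := by
  rw [sum_mul_norm_sub_sq_eq hπ]
  exact sub_le_self _ (sq_nonneg _)

noncomputable def importanceSamplingEstimate {ι κ E : Type*} [Fintype ι] [AddCommGroup E]
    [Module ℝ E] (π : κ → ℝ) (x : κ → E) (ω : ι → κ) : E :=
  (Fintype.card ι : ℝ)⁻¹ • ∑ t, (π (ω t))⁻¹ • x (ω t)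

theorem sum_pi_prod_mul_norm_sub_importanceSamplingEstimate_sq_le {ι κ 𝕜 : Type*} [Fintype ι]
    [DecidableEq ι] [Nonempty ι] [Fintype κ] [RCLike 𝕜] {π : κ → ℝ} (hπ0 : ∀ k, 0 < π k)
    (hπ : ∑ k, π k = 1) (x : κ → 𝕜) :
    ∑ ω : ι → κ, (∏ u, π (ω u)) * ‖∑ k, x k - importanceSamplingEstimate π x ω‖ ^ 2 ≤
      (Fintype.card ι : ℝ)⁻¹ * ∑ k, ‖x k‖ ^ 2 / π k := by
  set N : ℝ := (Fintype.card ι : ℝ)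
  have hN : 0 < N := Nat.cast_pos.2 Fintype.card_pos
  set Y : κ → 𝕜 := fun k => (π k)⁻¹ • x k
  have hmean : ∑ k, π k • Y k = ∑ k, x k :=
    sum_congr rfl fun k _ => by rw [smul_inv_smul₀ (hπ0 k).ne']
  set f : κ → 𝕜 := fun k => ∑ j, π j • Y j - Y k
  have hf : ∑ k, π k • f k = 0 := by
    simp only [f, smul_sub, sum_sub_distrib, ← sum_smul, hπ, one_smul, sub_self]
  have herror : ∀ ω : ι → κ,
      ∑ k, x k - importanceSamplingEstimate π x ω = N⁻¹ • ∑ t, f (ω t) := by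
    intro ω
    simp only [importanceSamplingEstimate, f, sum_sub_distrib, sum_const, card_univ, smul_sub,
      hmean, Y]
    rw [← Nat.cast_smul_eq_nsmul ℝ, inv_smul_smul₀ hN.ne']
  calc ∑ ω : ι → κ, (∏ u, π (ω u)) * ‖∑ k, x k - importanceSamplingEstimate π x ω‖ ^ 2
      = N⁻¹ ^ 2 * ∑ ω : ι → κ, (∏ u, π (ω u)) * ‖∑ t, f (ω t)‖ ^ 2 := by
        simp only [herror, norm_smul, mul_pow, mul_sum, Real.norm_eq_abs, abs_inv, abs_of_pos hN]
        exact sum_congr rfl fun ω _ => by ring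
    _ = N⁻¹ * ∑ k, π k * ‖f k‖ ^ 2 := by
        rw [sum_pi_prod_mul_norm_sum_sq hπ hf, sq, mul_assoc, inv_mul_cancel_left₀ hN.ne']
    _ ≤ N⁻¹ * ∑ k, π k * ‖Y k‖ ^ 2 :=
        mul_le_mul_of_nonneg_left (sum_mul_norm_sub_sq_le hπ Y) (inv_nonneg.2 hN.le)
    _ = N⁻¹ * ∑ k, ‖x k‖ ^ 2 / π k := by
        congr 1
        refine sum_congr rfl fun k _ => ?_
        rw [norm_smul, norm_inv, Real.norm_of_nonneg (hπ0 k).le]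
        field_simp

theorem Matrix.importanceSamplingEstimate_apply {ι κ l n α : Type*} [Fintype ι] [AddCommGroup α]
    [Module ℝ α] (π : κ → ℝ) (X : κ → Matrix l n α) (ω : ι → κ) (i : l) (j : n) :
    importanceSamplingEstimate π X ω i j = importanceSamplingEstimate π (fun k => X k i j) ω := by
  simp only [importanceSamplingEstimate, Matrix.smul_apply, Matrix.sum_apply]

theorem Matrix.sum_pi_prod_mul_frobenius_sub_importanceSamplingEstimate_le {ι l m n 𝕜 : Type*}
    [Fintype ι] [DecidableEq ι] [Nonempty ι] [Fintype l] [Fintype m] [Fintype n] [RCLike 𝕜]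
    {π : m → ℝ} (hπ0 : ∀ k, 0 < π k) (hπ : ∑ k, π k = 1) (A : Matrix l m 𝕜) (B : Matrix m n 𝕜) :
    ∑ ω : ι → m, (∏ u, π (ω u)) * ∑ i, ∑ j,
        ‖(A * B - importanceSamplingEstimate π (fun k => Matrix.of fun i j => A i k * B k j) ω)
          i j‖ ^ 2 ≤
      (Fintype.card ι : ℝ)⁻¹ * ∑ k, (∑ i, ‖A i k‖ ^ 2) * (∑ j, ‖B k j‖ ^ 2) / π k := by
  calc _ = ∑ i, ∑ j, ∑ ω : ι → m, (∏ u, π (ω u)) *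
          ‖∑ k, A i k * B k j - importanceSamplingEstimate π (fun k => A i k * B k j) ω‖ ^ 2 := by
        simp only [mul_sum, Matrix.sub_apply, Matrix.mul_apply,
          Matrix.importanceSamplingEstimate_apply, Matrix.of_apply]
        rw [sum_comm]
        exact sum_congr rfl fun i _ => sum_comm
    _ ≤ ∑ i, ∑ j, (Fintype.card ι : ℝ)⁻¹ * ∑ k, ‖A i k * B k j‖ ^ 2 / π k := by
        gcongr with i _ j _
        exact sum_pi_prod_mul_norm_sub_importanceSamplingEstimate_sq_le hπ0 hπ _
    _ = _ := by
        simp only [sum_mul_sum, sum_div]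
        simp only [mul_sum, norm_mul, mul_pow]
        conv_rhs => rw [sum_comm]
        exact sum_congr rfl fun i _ => sum_comm

theorem sum_sq_div_le_sq_sum_div {κ : Type*} [Fintype κ] {x π : κ → ℝ} {β : ℝ}
    (hx : ∀ k, 0 ≤ x k) (hπ : ∀ k, 0 < π k) (hβ : 0 < β)
    (hlb : ∀ k, β * x k / ∑ j, x j ≤ π k) :
    ∑ k, x k ^ 2 / π k ≤ (∑ k, x k) ^ 2 / β := by
  set S := ∑ j, x j
  have hscaled : ∀ k, β * x k ≤ π k * S := by
    intro k
    have hS0 : 0 ≤ S := sum_nonneg fun j _ => hx j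
    rcases hS0.eq_or_lt with hS | hS
    -- for `S = 0` the hypothesis `hlb` is void (`_ / 0 = 0`), but then every `x k` vanishes
    · have hxk : x k = 0 := le_antisymm (hS ▸ single_le_sum (fun j _ => hx j) (mem_univ k)) (hx k)
      rw [hxk, mul_zero]
      exact mul_nonneg (hπ k).le hS0
    · rw [← div_le_iff₀ hS]
      exact hlb k
  calc ∑ k, x k ^ 2 / π k ≤ ∑ k, x k * S / β := by
        refine sum_le_sum fun k _ => ?_
        rw [div_le_div_iff₀ (hπ k) hβ]
        nlinarith [mul_le_mul_of_nonneg_left (hscaled k) (hx k)]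
    _ = S ^ 2 / β := by rw [← sum_div, ← sum_mul, sq]

theorem randomized_matmul_error_beta_general (m n p τ : ℕ) (hτ : 0 < τ)
    (A : Matrix (Fin m) (Fin n) ℂ) (B : Matrix (Fin n) (Fin p) ℂ)
    (π : Fin n → ℝ) (hπ : ∀ i, 0 < π i) (hsum : ∑ i, π i = 1)
    (β : ℝ) (hβ0 : 0 < β)
    (hπlb : ∀ i, π i ≥ β * (Real.sqrt (∑ k, ‖A k i‖ ^ 2) * Real.sqrt (∑ q, ‖B i q‖ ^ 2)) /
      ∑ j, Real.sqrt (∑ k, ‖A k j‖ ^ 2) * Real.sqrt (∑ q, ‖B j q‖ ^ 2)) :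
    let w : (Fin τ → Fin n) → ℝ := fun ω => ∏ t, π (ω t)
    let M : (Fin τ → Fin n) → Matrix (Fin m) (Fin p) ℂ := fun ω =>
      (τ : ℝ)⁻¹ • ∑ t, (π (ω t))⁻¹ • Matrix.of (fun i j => A i (ω t) * B (ω t) j)
    (∑ ω, w ω * ∑ i, ∑ j, ‖(A * B - M ω) i j‖ ^ 2) ≤
      (β * τ)⁻¹ * ((∑ i, ∑ k, ‖A k i‖ ^ 2) * (∑ i, ∑ j, ‖B i j‖ ^ 2)) := by
  intro w M
  have := Fin.pos_iff_nonempty.1 hτ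
  set a : Fin n → ℝ := fun k => √(∑ i, ‖A i k‖ ^ 2)
  set b : Fin n → ℝ := fun k => √(∑ j, ‖B k j‖ ^ 2)
  have hcol : ∀ k, a k ^ 2 = ∑ i, ‖A i k‖ ^ 2 := fun k =>
    Real.sq_sqrt (sum_nonneg fun _ _ => sq_nonneg _)
  have hrow : ∀ k, b k ^ 2 = ∑ j, ‖B k j‖ ^ 2 := fun k =>
    Real.sq_sqrt (sum_nonneg fun _ _ => sq_nonneg _)
  calc ∑ ω, w ω * ∑ i, ∑ j, ‖(A * B - M ω) i j‖ ^ 2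
      ≤ (τ : ℝ)⁻¹ * ∑ k, (a k * b k) ^ 2 / π k := by
        simpa only [mul_pow, hcol, hrow, importanceSamplingEstimate, Fintype.card_fin] using
          Matrix.sum_pi_prod_mul_frobenius_sub_importanceSamplingEstimate_le (ι := Fin τ)
            hπ hsum A B
    _ ≤ (τ : ℝ)⁻¹ * ((∑ k, a k * b k) ^ 2 / β) := by
        gcongr
        exact sum_sq_div_le_sq_sum_div (fun k => by positivity) hπ hβ0 hπlb
    _ ≤ (τ : ℝ)⁻¹ * ((∑ k, a k ^ 2) * (∑ k, b k ^ 2) / β) := by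
        gcongr
        exact sum_mul_sq_le_sq_mul_sq _ a b
    _ = (β * τ)⁻¹ * ((∑ i, ∑ k, ‖A k i‖ ^ 2) * (∑ i, ∑ j, ‖B i j‖ ^ 2)) := by
        simp only [hcol, hrow]
        ring

/-- Matrix version of Lemma 4.1: if the sampling probabilities satisfy
`π i ≥ β ‖A_{(:,i)}‖‖B_{(i,:)}‖ / ∑_j ‖A_{(:,j)}‖‖B_{(j,:)}‖` for some `β ∈ (0,1]`,
then `E[‖A*B - M‖_F²] ≤ ‖A‖_F² ‖B‖_F² / (β τ)`. -/
theorem randomized_matmul_error_beta (m n p τ : ℕ) (hτ : 0 < τ)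
    (A : Matrix (Fin m) (Fin n) ℂ) (B : Matrix (Fin n) (Fin p) ℂ)
    (π : Fin n → ℝ) (hπ : ∀ i, 0 < π i) (hsum : ∑ i, π i = 1)
    (β : ℝ) (hβ0 : 0 < β) (hβ1 : β ≤ 1)
    (hden : 0 < ∑ j, Real.sqrt (∑ k, ‖A k j‖ ^ 2) * Real.sqrt (∑ q, ‖B j q‖ ^ 2))
    (hπlb : ∀ i, π i ≥ β * (Real.sqrt (∑ k, ‖A k i‖ ^ 2) * Real.sqrt (∑ q, ‖B i q‖ ^ 2)) /
      ∑ j, Real.sqrt (∑ k, ‖A k j‖ ^ 2) * Real.sqrt (∑ q, ‖B j q‖ ^ 2)) :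
    let w : (Fin τ → Fin n) → ℝ := fun ω => ∏ t, π (ω t)
    let M : (Fin τ → Fin n) → Matrix (Fin m) (Fin p) ℂ := fun ω =>
      (τ : ℝ)⁻¹ • ∑ t, (π (ω t))⁻¹ • Matrix.of (fun i j => A i (ω t) * B (ω t) j)
    (∑ ω, w ω * ∑ i, ∑ j, ‖(A * B - M ω) i j‖ ^ 2) ≤
      (β * τ)⁻¹ * ((∑ i, ∑ k, ‖A k i‖ ^ 2) * (∑ i, ∑ j, ‖B i j‖ ^ 2)) :=
  randomized_matmul_error_beta_general m n p τ hτ A B π hπ hsum β hβ0 hπlb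
end

section
/- Let $X \in \mathbb{C}^{n\times p}$ have full column rank $p$ with thin SVD $X = U\Sigma V^H$, let $U^\perp \in \mathbb{C}^{n\times(n-p)}$ complete $U$ to an orthonormal basis, and let $y \in \mathbb{C}^n$. Let $M \in \mathbb{C}^{\tau\times n}$ be such that $MU$ has full column rank. Let $\hat b_{\rm ols} = X^\dagger y$ and $\hat b_M = (MX)^\dagger M y$. Then $\hat b_{\rm ols} - \hat b_M = -V\Sigma^{-1}(MU)^\dagger M U^\perp (U^\perp)^H y$. -/
open Finset Matrix

/-- `B` is a Moore–Penrose pseudoinverse of `A`. -/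
def IsMoorePenroseInv {m n : ℕ} (A : Matrix (Fin m) (Fin n) ℂ)
    (B : Matrix (Fin n) (Fin m) ℂ) : Prop :=
  A * B * A = A ∧ B * A * B = B ∧ (A * B)ᴴ = A * B ∧ (B * A)ᴴ = B * A

/-- The Moore–Penrose pseudoinverse is unique. -/
lemma mp_unique {m n : ℕ} {A : Matrix (Fin m) (Fin n) ℂ} {B C : Matrix (Fin n) (Fin m) ℂ}
    (hB : IsMoorePenroseInv A B) (hC : IsMoorePenroseInv A C) : B = C := by
  obtain ⟨hB1, hB2, hB3, hB4⟩ := hB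
  obtain ⟨hC1, hC2, hC3, hC4⟩ := hC
  have hAB : A * B = A * C := by
    calc A * B = (A * B)ᴴ := hB3.symm
    _ = Bᴴ * Aᴴ := by rw [conjTranspose_mul]
    _ = Bᴴ * (A * C * A)ᴴ := by rw [hC1]
    _ = Bᴴ * (Aᴴ * (A * C)ᴴ) := by rw [conjTranspose_mul]
    _ = Bᴴ * (Aᴴ * (A * C)) := by rw [hC3]
    _ = (A * B)ᴴ * (A * C) := by rw [conjTranspose_mul, Matrix.mul_assoc]
    _ = (A * B) * (A * C) := by rw [hB3]
    _ = (A * B * A) * C := by rw [← Matrix.mul_assoc]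
    _ = A * C := by rw [hB1]
  have hBA : B * A = C * A := by
    calc B * A = (B * A)ᴴ := hB4.symm
    _ = Aᴴ * Bᴴ := by rw [conjTranspose_mul]
    _ = (A * C * A)ᴴ * Bᴴ := by rw [hC1]
    _ = (A * (C * A))ᴴ * Bᴴ := by rw [Matrix.mul_assoc]
    _ = ((C * A)ᴴ * Aᴴ) * Bᴴ := by rw [conjTranspose_mul]
    _ = ((C * A) * Aᴴ) * Bᴴ := by rw [hC4]
    _ = (C * A) * (Aᴴ * Bᴴ) := Matrix.mul_assoc _ _ _
    _ = (C * A) * (B * A)ᴴ := by rw [← conjTranspose_mul]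
    _ = (C * A) * (B * A) := by rw [hB4]
    _ = C * (A * (B * A)) := by simp only [Matrix.mul_assoc]
    _ = C * A := by rw [← Matrix.mul_assoc A, hB1]
  calc B = B * A * B := hB2.symm
  _ = C * A * B := by rw [hBA]
  _ = C * (A * B) := Matrix.mul_assoc _ _ _
  _ = C * (A * C) := by rw [hAB]
  _ = C * A * C := (Matrix.mul_assoc _ _ _).symm
  _ = C := hC2

lemma matrix_ext_mulVec {a b : ℕ} {A B : Matrix (Fin a) (Fin b) ℂ}
    (h : ∀ v, A *ᵥ v = B *ᵥ v) : A = B := by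
  ext i j
  simpa using congrFun (h (Pi.single j 1)) i

lemma mulVec_inj_of_rank {m q : ℕ} (A : Matrix (Fin m) (Fin q) ℂ) (h : A.rank = q)
    (v : Fin q → ℂ) (hv : A *ᵥ v = 0) : v = 0 := by
  have h1 := LinearMap.finrank_range_add_finrank_ker A.mulVecLin
  rw [show Matrix.rank A = Module.finrank ℂ (LinearMap.range A.mulVecLin) from rfl] at h
  rw [h, Module.finrank_pi] at h1
  simp at h1
  have : v ∈ LinearMap.ker A.mulVecLin := by simpa [Matrix.mulVecLin_apply] using hv
  simpa [h1] using this

/-- A Moore–Penrose inverse of a full-column-rank matrix is a left inverse. -/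
lemma mp_left_inv {m q : ℕ} {A : Matrix (Fin m) (Fin q) ℂ} {B : Matrix (Fin q) (Fin m) ℂ}
    (hB : IsMoorePenroseInv A B) (h : A.rank = q) : B * A = 1 := by
  apply matrix_ext_mulVec
  intro v
  have key : A *ᵥ ((B * A) *ᵥ v - v) = 0 := by
    rw [Matrix.mulVec_sub, Matrix.mulVec_mulVec, ← Matrix.mul_assoc, hB.1, sub_self]
  have := mulVec_inj_of_rank A h _ key
  rw [sub_eq_zero] at this
  simpa using this

/-- Structural identity in Theorem 5.1 (matrix version):
`b̂_ols - b̂_M = -V Σ⁻¹ (MU)† M U^⊥ (U^⊥)ᴴ y`. -/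
theorem ols_minus_sketched_sol (n p τ : ℕ)
    (X U : Matrix (Fin n) (Fin p) ℂ) (V : Matrix (Fin p) (Fin p) ℂ)
    (Uperp : Matrix (Fin n) (Fin (n - p)) ℂ)
    (s : Fin p → ℝ) (hs : ∀ i, 0 < s i)
    (hU : Uᴴ * U = 1) (hV : Vᴴ * V = 1) (hV' : V * Vᴴ = 1)
    (hUperp : Uperpᴴ * Uperp = 1) (hmix : Uᴴ * Uperp = 0)
    (hcomplete : U * Uᴴ + Uperp * Uperpᴴ = 1)
    (hSVD : X = U * Matrix.diagonal (fun i => (s i : ℂ)) * Vᴴ)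
    (hXrank : X.rank = p)
    (M : Matrix (Fin τ) (Fin n) ℂ) (hMU : (M * U).rank = p)
    (y : Fin n → ℂ)
    (GX : Matrix (Fin p) (Fin n) ℂ) (hGX : IsMoorePenroseInv X GX)
    (GMX : Matrix (Fin p) (Fin τ) ℂ) (hGMX : IsMoorePenroseInv (M * X) GMX)
    (H : Matrix (Fin p) (Fin τ) ℂ) (hH : IsMoorePenroseInv (M * U) H) :
    GX *ᵥ y - GMX *ᵥ (M *ᵥ y) =
      -((V * (Matrix.diagonal (fun i => (s i : ℂ)))⁻¹ * H) *ᵥ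
        (M *ᵥ ((Uperp * Uperpᴴ) *ᵥ y))) := by
  set D : Matrix (Fin p) (Fin p) ℂ := Matrix.diagonal (fun i => (s i : ℂ)) with hD
  set Dinv : Matrix (Fin p) (Fin p) ℂ := Matrix.diagonal (fun i => ((s i : ℂ))⁻¹) with hDinv
  have hsne : ∀ i, (s i : ℂ) ≠ 0 := fun i => by
    exact_mod_cast Complex.ofReal_ne_zero.mpr (ne_of_gt (hs i))
  have hDD : D * Dinv = 1 := by
    rw [hD, hDinv, Matrix.diagonal_mul_diagonal]
    convert Matrix.diagonal_one using 2
    exact funext fun i => mul_inv_cancel₀ (hsne i)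
  have hDD' : Dinv * D = 1 := by
    rw [hD, hDinv, Matrix.diagonal_mul_diagonal]
    convert Matrix.diagonal_one using 2
    exact funext fun i => inv_mul_cancel₀ (hsne i)
  have hDinv_eq : D⁻¹ = Dinv := Matrix.inv_eq_left_inv hDD'
  -- cancellation lemmas
  have cVV : ∀ {k : ℕ} (A : Matrix (Fin p) (Fin k) ℂ), Vᴴ * (V * A) = A := fun A => by
    rw [← Matrix.mul_assoc, hV, Matrix.one_mul]
  have cVV' : ∀ {k : ℕ} (A : Matrix (Fin p) (Fin k) ℂ), V * (Vᴴ * A) = A := fun A => by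
    rw [← Matrix.mul_assoc, hV', Matrix.one_mul]
  have cUU : ∀ {k : ℕ} (A : Matrix (Fin p) (Fin k) ℂ), Uᴴ * (U * A) = A := fun A => by
    rw [← Matrix.mul_assoc, hU, Matrix.one_mul]
  have cDD : ∀ {k : ℕ} (A : Matrix (Fin p) (Fin k) ℂ), D * (Dinv * A) = A := fun A => by
    rw [← Matrix.mul_assoc, hDD, Matrix.one_mul]
  have cDD' : ∀ {k : ℕ} (A : Matrix (Fin p) (Fin k) ℂ), Dinv * (D * A) = A := fun A => by
    rw [← Matrix.mul_assoc, hDD', Matrix.one_mul]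
  have hHMU : H * (M * U) = 1 := mp_left_inv hH hMU
  have cH : ∀ {k : ℕ} (A : Matrix (Fin p) (Fin k) ℂ), H * (M * (U * A)) = A := fun A => by
    rw [← Matrix.mul_assoc M U, ← Matrix.mul_assoc, hHMU, Matrix.one_mul]
  -- GX equals V * Dinv * Uᴴ
  have hBX : IsMoorePenroseInv X (V * Dinv * Uᴴ) := by
    refine ⟨?_, ?_, ?_, ?_⟩
    · rw [hSVD]; simp only [Matrix.mul_assoc, cVV, cUU, cDD, cDD']
    · rw [hSVD]; simp only [Matrix.mul_assoc, cVV, cUU, cDD, cDD']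
    · rw [hSVD]; simp only [Matrix.mul_assoc, cVV, cUU, cDD, cDD']
      simp [conjTranspose_mul]
    · rw [hSVD]; simp only [Matrix.mul_assoc, cVV, cUU, cDD, cDD']
      simp [hV', Matrix.mul_assoc, cVV']
  have hGXeq : GX = V * Dinv * Uᴴ := mp_unique hGX hBX
  -- GMX equals V * Dinv * H
  have hCX : IsMoorePenroseInv (M * X) (V * Dinv * H) := by
    refine ⟨?_, ?_, ?_, ?_⟩
    · rw [hSVD]; simp only [Matrix.mul_assoc, cVV, cH, cDD, cDD']
    · rw [hSVD]; simp only [Matrix.mul_assoc, cVV, cH, cDD, cDD']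
    · rw [hSVD]; simp only [Matrix.mul_assoc, cVV, cH, cDD, cDD']
      simpa [Matrix.mul_assoc] using hH.2.2.1
    · rw [hSVD]; simp only [Matrix.mul_assoc, cVV, cH, cDD, cDD']
      simp [hV', Matrix.mul_assoc, cVV']
  have hGMXeq : GMX = V * Dinv * H := mp_unique hGMX hCX
  rw [hGXeq, hGMXeq, hDinv_eq]
  rw [Matrix.mulVec_mulVec, Matrix.mulVec_mulVec, Matrix.mulVec_mulVec,
    ← Matrix.sub_mulVec, ← Matrix.neg_mulVec]
  congr 1
  have hUperpUperp : Uperp * Uperpᴴ = 1 - U * Uᴴ := by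
    rw [← hcomplete]; abel
  have key : V * Dinv * H * M * (U * Uᴴ) = V * Dinv * Uᴴ := by
    simp only [Matrix.mul_assoc, cH]
  rw [hUperpUperp, Matrix.mul_sub, Matrix.mul_one, neg_sub, key]
end

section
/- Under the setting of the previous statement, additionally define $\Gamma = (MU)^\dagger - (MU)^H$ and $r = U^\perp (U^\perp)^H y$. Then $\|\hat b_{\rm ols} - \hat b_M\|_2^2 \le \frac{2}{\sigma_{\min}(X)^2}\left(\|U^H M^H M r\|_2^2 + \|\Gamma\|_2^2 \|M r\|_2^2\right)$, where $\sigma_{\min}(X)$ is the smallest singular value of $X$. -/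
open Finset Matrix
open scoped Matrix.Norms.L2Operator

/-! With `X = U Σ Vᴴ` both pseudoinverses are explicit: `X† = V Σ⁻¹ Uᴴ` and, since full column rank
of `MU` forces `(MU)† (MU) = 1`, `(MX)† = V Σ⁻¹ (MU)†`. Splitting `y = U Uᴴ y + r`, both solvers
reproduce the component `U Uᴴ y` exactly, so `b̂_ols - b̂_M = -V Σ⁻¹ (MU)† M r` with
`(MU)† = (MU)ᴴ + Γ`. As `V` is an isometry and `‖Σ⁻¹‖₂ ≤ 1 / σ_min`, the bound follows from
`‖a + b‖² ≤ 2‖a‖² + 2‖b‖²` and `‖Γ M r‖ ≤ ‖Γ‖₂ ‖M r‖`. -/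

namespace Matrix

lemma isUnit_of_rank_eq_card {K n : Type*} [Field K] [Fintype n] [DecidableEq n]
    {A : Matrix n n K} (hA : A.rank = Fintype.card n) : IsUnit A := by
  rw [← mulVec_surjective_iff_isUnit, ← coe_mulVecLin, ← LinearMap.range_eq_top]
  exact Submodule.eq_top_of_finrank_eq (by rwa [Module.finrank_fintype_fun_eq_card])

lemma mulVec_mulVec_eq_add_of_mul_eq_one {R l m n : Type*} [Semiring R] [Fintype l] [Fintype m]
    [Fintype n] [DecidableEq l] [DecidableEq n] {H : Matrix l m R} {M : Matrix m n R}
    {U : Matrix n l R} {W : Matrix l n R} {P : Matrix n n R} (hHMU : H * (M * U) = 1) (hUW : U * W + P = 1)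
    (y : n → R) : H *ᵥ (M *ᵥ y) = W *ᵥ y + H *ᵥ (M *ᵥ (P *ᵥ y)) := calc
  H *ᵥ (M *ᵥ y) = H *ᵥ (M *ᵥ ((U * W + P) *ᵥ y)) := by rw [hUW, one_mulVec]
  _ = (H * (M * U)) *ᵥ (W *ᵥ y) + H *ᵥ (M *ᵥ (P *ᵥ y)) := by
    simp only [add_mulVec, mulVec_add, ← mulVec_mulVec]
  _ = W *ᵥ y + H *ᵥ (M *ᵥ (P *ᵥ y)) := by rw [hHMU, one_mulVec]

section RCLike

variable {𝕜 m n : Type*} [RCLike 𝕜] [Fintype m] [Fintype n]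

lemma ofReal_sum_norm_sq_eq_star_dotProduct (v : n → 𝕜) :
    ((∑ i, ‖v i‖ ^ 2 : ℝ) : 𝕜) = star v ⬝ᵥ v := by
  simp [dotProduct, RCLike.conj_mul]

lemma sum_norm_sq_mulVec_eq_of_conjTranspose_mul_self [DecidableEq n] {A : Matrix m n 𝕜}
    (hA : Aᴴ * A = 1) (w : n → 𝕜) : ∑ i, ‖(A *ᵥ w) i‖ ^ 2 = ∑ j, ‖w j‖ ^ 2 := by
  apply RCLike.ofReal_injective (K := 𝕜)
  rw [ofReal_sum_norm_sq_eq_star_dotProduct, ofReal_sum_norm_sq_eq_star_dotProduct, star_mulVec,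
    dotProduct_mulVec, vecMul_vecMul, hA, vecMul_one]

lemma sum_norm_sq_mulVec_le [DecidableEq n] (A : Matrix m n 𝕜) (w : n → 𝕜) :
    ∑ i, ‖(A *ᵥ w) i‖ ^ 2 ≤ ‖A‖ ^ 2 * ∑ j, ‖w j‖ ^ 2 := by
  have h := l2_opNorm_mulVec A (WithLp.toLp 2 w)
  rw [← EuclideanSpace.norm_sq_eq (WithLp.toLp 2 w),
    ← EuclideanSpace.norm_sq_eq (WithLp.toLp 2 (A *ᵥ w)), ← mul_pow]
  exact pow_le_pow_left₀ (norm_nonneg _) h 2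

lemma sum_norm_sq_add_le (v w : m → 𝕜) :
    ∑ i, ‖(v + w) i‖ ^ 2 ≤ 2 * ∑ i, ‖v i‖ ^ 2 + 2 * ∑ i, ‖w i‖ ^ 2 := by
  rw [← mul_add, ← sum_add_distrib, mul_sum]
  gcongr with i
  calc ‖v i + w i‖ ^ 2 ≤ (‖v i‖ + ‖w i‖) ^ 2 := by gcongr; exact norm_add_le _ _
    _ ≤ 2 * (‖v i‖ ^ 2 + ‖w i‖ ^ 2) := add_sq_le

lemma l2_opNorm_diagonal_inv_le_inv_iInf [DecidableEq n] [Nonempty n] {s : n → ℝ}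
    (hs : ∀ i, 0 < s i) : ‖diagonal fun i => (s i : 𝕜)⁻¹‖ ≤ (⨅ i, s i)⁻¹ := by
  obtain ⟨i₀, hi₀⟩ := exists_eq_ciInf_of_finite (f := s)
  rw [l2_opNorm_diagonal, pi_norm_le_iff_of_nonneg (by rw [← hi₀]; exact (inv_pos.2 (hs i₀)).le)]
  intro i
  rw [norm_inv, RCLike.norm_ofReal, abs_of_pos (hs i)]
  exact inv_anti₀ (hi₀ ▸ hs i₀) (ciInf_le (Set.finite_range s).bddBelow i)

lemma diagonal_mul_conjTranspose_mul_mul_diagonal_inv [DecidableEq n] {V : Matrix n n 𝕜}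
    {d : n → 𝕜} (hd : ∀ i, d i ≠ 0) (hV : Vᴴ * V = 1) :
    diagonal d * Vᴴ * (V * diagonal fun i => (d i)⁻¹) = 1 := by
  rw [Matrix.mul_assoc, ← Matrix.mul_assoc Vᴴ, hV, Matrix.one_mul, diagonal_mul_diagonal]
  simp [hd]

end RCLike

end Matrix

namespace IsMoorePenroseInv

variable {m n : ℕ} {A : Matrix (Fin m) (Fin n) ℂ} {B : Matrix (Fin n) (Fin m) ℂ}

lemma mul_eq_one_of_rank_eq (hB : IsMoorePenroseInv A B) (hA : A.rank = n) : B * A = 1 := by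
  have hidem : B * A * (B * A) = B * A := by rw [← Matrix.mul_assoc, hB.2.1]
  have hrank : (B * A).rank = Fintype.card (Fin n) := by
    refine le_antisymm (rank_le_card_width _) ?_
    calc Fintype.card (Fin n) = A.rank := by rw [hA, Fintype.card_fin]
      _ = (A * (B * A)).rank := by rw [← Matrix.mul_assoc, hB.1]
      _ ≤ (B * A).rank := rank_mul_le_right _ _
  exact (isUnit_of_rank_eq_card hrank).mul_left_cancel (by rw [Matrix.mul_one, hidem])

lemma eq_of_mul_eq_one (hB : IsMoorePenroseInv A B) {C : Matrix (Fin n) (Fin m) ℂ}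
    (hCA : C * A = 1) (hAC : (A * C)ᴴ = A * C) : B = C := by
  have hBA : B * A = 1 := calc
    B * A = C * A * (B * A) := by rw [hCA, Matrix.one_mul]
    _ = C * (A * B * A) := by simp only [Matrix.mul_assoc]
    _ = 1 := by rw [hB.1, hCA]
  -- both `A * B` and `A * C` are hermitian and each absorbs the other from the left
  have hAB : A * B = A * C := calc
    A * B = A * (C * A) * B := by rw [hCA, Matrix.mul_one]
    _ = (A * B * (A * C))ᴴ := by
      rw [conjTranspose_mul, hB.2.2.1, hAC]; simp only [Matrix.mul_assoc]
    _ = A * C := by rw [Matrix.mul_assoc A B, ← Matrix.mul_assoc B, hBA, Matrix.one_mul, hAC]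
  calc B = B * A * B := hB.2.1.symm
    _ = C := by rw [Matrix.mul_assoc, hAB, ← Matrix.mul_assoc, hBA, Matrix.one_mul]

lemma eq_mul_of_mul_eq_one {Q R : Matrix (Fin n) (Fin n) ℂ} {G : Matrix (Fin n) (Fin m) ℂ}
    (hG : IsMoorePenroseInv (A * Q) G)
    {C : Matrix (Fin n) (Fin m) ℂ} (hCA : C * A = 1) (hAC : (A * C)ᴴ = A * C) (hQR : Q * R = 1) :
    G = R * C := by
  refine hG.eq_of_mul_eq_one ?_ ?_
  · rw [Matrix.mul_assoc, ← Matrix.mul_assoc C, hCA, Matrix.one_mul, mul_eq_one_comm.mp hQR]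
  · rwa [Matrix.mul_assoc, ← Matrix.mul_assoc Q, hQR, Matrix.one_mul]

end IsMoorePenroseInv

theorem ols_minus_sketched_sol_bound_general (n p τ : ℕ) (hp : 0 < p)
    (X U : Matrix (Fin n) (Fin p) ℂ) (V : Matrix (Fin p) (Fin p) ℂ)
    (Uperp : Matrix (Fin n) (Fin (n - p)) ℂ)
    (s : Fin p → ℝ) (hs : ∀ i, 0 < s i)
    (hU : Uᴴ * U = 1) (hV : Vᴴ * V = 1)
    (hcomplete : U * Uᴴ + Uperp * Uperpᴴ = 1)
    (hSVD : X = U * Matrix.diagonal (fun i => (s i : ℂ)) * Vᴴ)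
    (M : Matrix (Fin τ) (Fin n) ℂ) (hMU : (M * U).rank = p)
    (y : Fin n → ℂ)
    (GX : Matrix (Fin p) (Fin n) ℂ) (hGX : IsMoorePenroseInv X GX)
    (GMX : Matrix (Fin p) (Fin τ) ℂ) (hGMX : IsMoorePenroseInv (M * X) GMX)
    (H : Matrix (Fin p) (Fin τ) ℂ) (hH : IsMoorePenroseInv (M * U) H) :
    haveI : Nonempty (Fin p) := ⟨⟨0, hp⟩⟩
    let Γ : Matrix (Fin p) (Fin τ) ℂ := H - (M * U)ᴴ
    let r : Fin n → ℂ := (Uperp * Uperpᴴ) *ᵥ y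
    (∑ k, ‖(GX *ᵥ y - GMX *ᵥ (M *ᵥ y)) k‖ ^ 2) ≤
      (2 / (⨅ i, s i) ^ 2) *
        ((∑ k, ‖((Uᴴ * Mᴴ) *ᵥ (M *ᵥ r)) k‖ ^ 2) +
          ‖Γ‖ ^ 2 * ∑ t, ‖(M *ᵥ r) t‖ ^ 2) := by
  intro Γ r
  have : Nonempty (Fin p) := ⟨⟨0, hp⟩⟩
  set S := diagonal fun i => (s i : ℂ)
  set S' := diagonal fun i => (s i : ℂ)⁻¹
  have hQR : S * Vᴴ * (V * S') = 1 :=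
    diagonal_mul_conjTranspose_mul_mul_diagonal_inv (fun i => by simpa using (hs i).ne') hV
  have hHMU : H * (M * U) = 1 := hH.mul_eq_one_of_rank_eq hMU
  rw [hSVD, Matrix.mul_assoc] at hGX
  rw [hSVD, Matrix.mul_assoc U, ← Matrix.mul_assoc M] at hGMX
  have hGX' : GX = V * S' * Uᴴ :=
    hGX.eq_mul_of_mul_eq_one hU (isHermitian_mul_conjTranspose_self U) hQR
  have hGMX' : GMX = V * S' * H := hGMX.eq_mul_of_mul_eq_one hHMU hH.2.2.1 hQR
  have hHMy : H *ᵥ (M *ᵥ y) = Uᴴ *ᵥ y + H *ᵥ (M *ᵥ r) :=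
    mulVec_mulVec_eq_add_of_mul_eq_one hHMU hcomplete y
  have hdiff : GX *ᵥ y - GMX *ᵥ (M *ᵥ y) = -(V *ᵥ (S' *ᵥ (H *ᵥ (M *ᵥ r)))) := by
    simp only [hGX', hGMX', ← mulVec_mulVec, hHMy, mulVec_add]
    abel
  have hHsplit : H *ᵥ (M *ᵥ r) = (Uᴴ * Mᴴ) *ᵥ (M *ᵥ r) + Γ *ᵥ (M *ᵥ r) := by
    rw [← add_mulVec, ← conjTranspose_mul, add_sub_cancel]
  calc ∑ k, ‖(GX *ᵥ y - GMX *ᵥ (M *ᵥ y)) k‖ ^ 2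
      = ∑ k, ‖(S' *ᵥ (H *ᵥ (M *ᵥ r))) k‖ ^ 2 := by
        simp only [hdiff, Pi.neg_apply, norm_neg,
          sum_norm_sq_mulVec_eq_of_conjTranspose_mul_self hV]
    _ ≤ (⨅ i, s i)⁻¹ ^ 2 * ∑ k, ‖(H *ᵥ (M *ᵥ r)) k‖ ^ 2 := by
        grw [sum_norm_sq_mulVec_le, show ‖S'‖ ≤ _ from l2_opNorm_diagonal_inv_le_inv_iInf hs]
    _ ≤ (⨅ i, s i)⁻¹ ^ 2 * (2 * ∑ k, ‖((Uᴴ * Mᴴ) *ᵥ (M *ᵥ r)) k‖ ^ 2 +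
          2 * (‖Γ‖ ^ 2 * ∑ t, ‖(M *ᵥ r) t‖ ^ 2)) := by
        grw [hHsplit, sum_norm_sq_add_le, sum_norm_sq_mulVec_le Γ]
    _ = _ := by ring

/-- Key inequality in the proof of Theorem 5.1 (matrix version): with
`Γ = (MU)† - (MU)ᴴ` and `r = U^⊥ (U^⊥)ᴴ y`,
`‖b̂_ols - b̂_M‖₂² ≤ (2/σ_min(X)²) (‖Uᴴ Mᴴ M r‖₂² + ‖Γ‖₂² ‖M r‖₂²)`. -/
theorem ols_minus_sketched_sol_bound (n p τ : ℕ) (hp : 0 < p)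
    (X U : Matrix (Fin n) (Fin p) ℂ) (V : Matrix (Fin p) (Fin p) ℂ)
    (Uperp : Matrix (Fin n) (Fin (n - p)) ℂ)
    (s : Fin p → ℝ) (hs : ∀ i, 0 < s i)
    (hU : Uᴴ * U = 1) (hV : Vᴴ * V = 1) (hV' : V * Vᴴ = 1)
    (hUperp : Uperpᴴ * Uperp = 1) (hmix : Uᴴ * Uperp = 0)
    (hcomplete : U * Uᴴ + Uperp * Uperpᴴ = 1)
    (hSVD : X = U * Matrix.diagonal (fun i => (s i : ℂ)) * Vᴴ)
    (hXrank : X.rank = p)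
    (M : Matrix (Fin τ) (Fin n) ℂ) (hMU : (M * U).rank = p)
    (y : Fin n → ℂ)
    (GX : Matrix (Fin p) (Fin n) ℂ) (hGX : IsMoorePenroseInv X GX)
    (GMX : Matrix (Fin p) (Fin τ) ℂ) (hGMX : IsMoorePenroseInv (M * X) GMX)
    (H : Matrix (Fin p) (Fin τ) ℂ) (hH : IsMoorePenroseInv (M * U) H) :
    haveI : Nonempty (Fin p) := ⟨⟨0, hp⟩⟩
    let Γ : Matrix (Fin p) (Fin τ) ℂ := H - (M * U)ᴴ
    let r : Fin n → ℂ := (Uperp * Uperpᴴ) *ᵥ y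
    (∑ k, ‖(GX *ᵥ y - GMX *ᵥ (M *ᵥ y)) k‖ ^ 2) ≤
      (2 / (⨅ i, s i) ^ 2) *
        ((∑ k, ‖((Uᴴ * Mᴴ) *ᵥ (M *ᵥ r)) k‖ ^ 2) +
          ‖Γ‖ ^ 2 * ∑ t, ‖(M *ᵥ r) t‖ ^ 2) :=
  ols_minus_sketched_sol_bound_general n p τ hp X U V Uperp s hs hU hV hcomplete hSVD M hMU y GX hGX
    GMX hGMX H hH
end

section
/- Let $X \in \mathbb{R}^{n\times p}$ have full column rank, let $e$ be a random vector with mean $0$ and covariance $\sigma^2 I_n$, and $y = X b_0 + e$. Let $w$ be a random weight vector independent of $e$ with $\mathbf{E}[w] = \mathbf{1}$ and $\mathbf{Cov}[w] = \mathrm{diag}(1/(\tau\pi_i)) - \frac{1}{\tau}J_n$, and define the linearized estimator $\hat b_L = \hat b_{\rm ols} + (X^TX)^{-1}X^T\mathrm{diag}(\tilde e)(w - \mathbf{1})$, where $\hat b_{\rm ols} = (X^TX)^{-1}X^Ty$ and $\tilde e = y - X\hat b_{\rm ols}$. Then $\mathbf{E}[\hat b_L] = b_0$ and $\mathbf{Cov}[\hat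 b_L] = \sigma^2 (X^TX)^{-1} + \frac{\sigma^2}{\tau}(X^TX)^{-1}X^T \mathrm{diag}\left(\frac{1 - x_i^T(X^TX)^{-1}x_i}{\pi_i}\right) X (X^TX)^{-1}$. -/
open Finset Matrix MeasureTheory

private lemma aux_sum_integral {Ω₁ Ω₂ : Type*} [MeasurableSpace Ω₁] [MeasurableSpace Ω₂]
    {μ : Measure Ω₁} {ν : Measure Ω₂} [SFinite μ] [SFinite ν]
    {ι : Type*} [Fintype ι]
    (F : ι → Ω₁ → ℝ) (G : ι → Ω₂ → ℝ)
    (hF : ∀ q, Integrable (F q) μ) (hG : ∀ q, Integrable (G q) ν) :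
    ∫ ω, (∑ q, F q ω.1 * G q ω.2) ∂(μ.prod ν)
      = ∑ q, (∫ x, F q x ∂μ) * (∫ y, G q y ∂ν) := by
  rw [integral_finset_sum _ (fun q _ => (hF q).mul_prod (hG q))]
  exact Finset.sum_congr rfl fun q _ => integral_prod_mul (F q) (G q)

/-- Matrix version of Theorem 5.2 for the linearized subsampled estimator
`b̂_L = b̂_ols + (XᵀX)⁻¹ Xᵀ diag(ẽ)(w - 1)`, with noise `e` (mean `0`, covariance `σ²I`)
and independent random weights `w` (mean `1`, covariance `diag(1/(τπᵢ)) - J/τ`):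
`E[b̂_L] = b₀` and
`Cov[b̂_L] = σ²(XᵀX)⁻¹ + (σ²/τ)(XᵀX)⁻¹Xᵀ diag((1 - xᵢᵀ(XᵀX)⁻¹xᵢ)/πᵢ) X (XᵀX)⁻¹`. -/
theorem linearized_subsampled_estimator_mean_cov (n p τ : ℕ) (hτ : 0 < τ)
    (X : Matrix (Fin n) (Fin p) ℝ) (hXrank : X.rank = p)
    (hdet : IsUnit (Xᵀ * X).det)
    (b₀ : Fin p → ℝ) (σ : ℝ)
    (π : Fin n → ℝ) (hπ : ∀ i, 0 < π i) (hπsum : ∑ i, π i = 1)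
    {Ω₁ Ω₂ : Type*} [MeasurableSpace Ω₁] [MeasurableSpace Ω₂]
    (μ : Measure Ω₁) (ν : Measure Ω₂)
    [IsProbabilityMeasure μ] [IsProbabilityMeasure ν]
    (e : Ω₁ → Fin n → ℝ) (w : Ω₂ → Fin n → ℝ)
    (he1 : ∀ i, Integrable (fun o => e o i) μ)
    (he2 : ∀ i j, Integrable (fun o => e o i * e o j) μ)
    (hw1 : ∀ i, Integrable (fun o => w o i) ν)
    (hw2 : ∀ i j, Integrable (fun o => w o i * w o j) ν)
    (hemean : ∀ i, ∫ o, e o i ∂μ = 0)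
    (hecov : ∀ i j, ∫ o, e o i * e o j ∂μ = if i = j then σ ^ 2 else 0)
    (hwmean : ∀ i, ∫ o, w o i ∂ν = 1)
    (hwcov : ∀ i j, ∫ o, (w o i - 1) * (w o j - 1) ∂ν =
      (if i = j then 1 / (τ * π i) else 0) - 1 / τ) :
    let bL : Ω₁ × Ω₂ → Fin p → ℝ := fun ω =>
      ((Xᵀ * X)⁻¹ * Xᵀ) *ᵥ (X *ᵥ b₀ + e ω.1) +
      ((Xᵀ * X)⁻¹ * Xᵀ *
        Matrix.diagonal ((X *ᵥ b₀ + e ω.1) -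
          X *ᵥ (((Xᵀ * X)⁻¹ * Xᵀ) *ᵥ (X *ᵥ b₀ + e ω.1)))) *ᵥ (w ω.2 - 1)
    (∀ k, (∫ ω, bL ω k ∂(μ.prod ν)) = b₀ k) ∧
    (∀ k l, (∫ ω, (bL ω k - b₀ k) * (bL ω l - b₀ l) ∂(μ.prod ν)) =
      (σ ^ 2 • (Xᵀ * X)⁻¹ +
        (σ ^ 2 / τ) • ((Xᵀ * X)⁻¹ * Xᵀ *
          Matrix.diagonal (fun i => (1 - X i ⬝ᵥ ((Xᵀ * X)⁻¹ *ᵥ X i)) / π i) *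
          X * (Xᵀ * X)⁻¹)) k l) := by
  intro bL
  -- matrix notation
  set A : Matrix (Fin p) (Fin n) ℝ := (Xᵀ * X)⁻¹ * Xᵀ with hA
  set H : Matrix (Fin n) (Fin n) ℝ := 1 - X * A with hH
  have hAX : A * X = 1 := by
    rw [hA, Matrix.mul_assoc]
    exact Matrix.nonsing_inv_mul _ hdet
  have hinv_symm : ((Xᵀ * X)⁻¹)ᵀ = (Xᵀ * X)⁻¹ := by
    rw [Matrix.transpose_nonsing_inv, Matrix.transpose_mul, Matrix.transpose_transpose]
  have hAT : Aᵀ = X * (Xᵀ * X)⁻¹ := by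
    rw [hA, Matrix.transpose_mul, Matrix.transpose_transpose, hinv_symm]
  have hXAsymm : (X * A)ᵀ = X * A := by
    rw [Matrix.transpose_mul, hAT, hA, ← Matrix.mul_assoc]
  have hHsymm : Hᵀ = H := by
    rw [hH, Matrix.transpose_sub, Matrix.transpose_one, hXAsymm]
  have hHH : H * H = H := by
    rw [hH]
    have : (X * A) * (X * A) = X * A := by
      rw [Matrix.mul_assoc X A (X * A), ← Matrix.mul_assoc A X A, hAX, Matrix.one_mul]
    simp only [Matrix.sub_mul, Matrix.mul_sub, Matrix.one_mul, Matrix.mul_one, this]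
    abel
  have hAH : A * H = 0 := by
    rw [hH, Matrix.mul_sub, Matrix.mul_one, ← Matrix.mul_assoc, hAX, Matrix.one_mul, sub_self]
  have hAAT : A * Aᵀ = (Xᵀ * X)⁻¹ := by
    rw [hAT, ← Matrix.mul_assoc, hAX, Matrix.one_mul]
  have hHe : ∀ i i', ∑ j, H i j * H i' j = H i i' := by
    intro i i'
    have h1 : (H * H) i i' = H i i' := by rw [hHH]
    rw [Matrix.mul_apply] at h1
    rw [← h1]
    refine Finset.sum_congr rfl fun j _ => ?_
    congr 1
    exact (congrFun (congrFun hHsymm.symm i') j :)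
  -- scalar decomposition of bL
  have hbL : ∀ (ω : Ω₁ × Ω₂) k, bL ω k = b₀ k + ((∑ i, A k i * e ω.1 i) +
      ∑ i, (A k i * ∑ j, H i j * e ω.1 j) * (w ω.2 i - 1)) := by
    intro ω k
    show (A *ᵥ (X *ᵥ b₀ + e ω.1) +
      (A * Matrix.diagonal ((X *ᵥ b₀ + e ω.1) - X *ᵥ (A *ᵥ (X *ᵥ b₀ + e ω.1)))) *ᵥ
        (w ω.2 - 1)) k = _
    have h1 : A *ᵥ (X *ᵥ b₀ + e ω.1) = b₀ + A *ᵥ e ω.1 := by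
      rw [Matrix.mulVec_add, Matrix.mulVec_mulVec, hAX, Matrix.one_mulVec]
    have h2 : (X *ᵥ b₀ + e ω.1) - X *ᵥ (b₀ + A *ᵥ e ω.1) = H *ᵥ e ω.1 := by
      rw [Matrix.mulVec_add, Matrix.mulVec_mulVec, hH, Matrix.sub_mulVec, Matrix.one_mulVec]
      abel
    rw [h1, h2]
    simp only [Pi.add_apply, Matrix.mulVec, dotProduct, Matrix.mul_diagonal,
      Pi.sub_apply, Pi.one_apply]
    ring
  -- index type and product decomposition
  set F : Fin p → (Fin n ⊕ Fin n × Fin n) → Ω₁ → ℝ :=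
    fun k q x => Sum.elim (fun i => A k i * e x i)
      (fun ij => A k ij.1 * H ij.1 ij.2 * e x ij.2) q with hF
  set G : (Fin n ⊕ Fin n × Fin n) → Ω₂ → ℝ :=
    fun q y => Sum.elim (fun _ => (1 : ℝ)) (fun ij => w y ij.1 - 1) q with hG
  have hbL2 : ∀ (ω : Ω₁ × Ω₂) k, bL ω k - b₀ k = ∑ q, F k q ω.1 * G q ω.2 := by
    intro ω k
    rw [hbL ω k, Fintype.sum_sum_type]
    simp only [hF, hG, Sum.elim_inl, Sum.elim_inr, mul_one]
    rw [Fintype.sum_prod_type]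
    have : ∀ i, ∑ j, A k i * H i j * e ω.1 j * (w ω.2 i - 1)
        = (A k i * ∑ j, H i j * e ω.1 j) * (w ω.2 i - 1) := by
      intro i
      rw [Finset.mul_sum, Finset.sum_mul]
      exact Finset.sum_congr rfl fun j _ => by ring
    simp only [this]
    ring
  -- integrability
  have hFint : ∀ k q, Integrable (F k q) μ := by
    rintro k (i | ⟨i, j⟩)
    · exact (he1 i).const_mul _
    · exact (he1 j).const_mul _
  have hGint : ∀ q, Integrable (G q) ν := by
    rintro (i | ⟨i, j⟩)
    · exact integrable_const 1
    · exact (hw1 i).sub (integrable_const 1)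
  have hFFint : ∀ k l q₁ q₂, Integrable (fun x => F k q₁ x * F l q₂ x) μ := by
    have key : ∀ (c c' : ℝ) (i j : Fin n),
        Integrable (fun x => (c * e x i) * (c' * e x j)) μ := by
      intro c c' i j
      have heq : (fun x => (c * e x i) * (c' * e x j))
          = fun x => (c * c') * (e x i * e x j) := by funext x; ring
      rw [heq]; exact (he2 i j).const_mul _
    rintro k l (i | ⟨i, j⟩) (i' | ⟨i', j'⟩)
    · exact key _ _ i i'
    · exact key _ _ i j'
    · exact key _ _ j i'
    · exact key _ _ j j'
  have hGGint : ∀ q₁ q₂, Integrable (fun y => G q₁ y * G q₂ y) ν := by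
    rintro (i | ⟨i, j⟩) (i' | ⟨i', j'⟩)
    · simp only [hG, Sum.elim_inl, one_mul]; exact integrable_const 1
    · simp only [hG, Sum.elim_inl, Sum.elim_inr, one_mul]
      exact (hw1 i').sub (integrable_const 1)
    · simp only [hG, Sum.elim_inl, Sum.elim_inr, mul_one]
      exact (hw1 i).sub (integrable_const 1)
    · have heq : (fun y => G (Sum.inr (i, j)) y * G (Sum.inr (i', j')) y)
          = fun y => (w y i * w y i' - w y i - w y i') + 1 := by
        funext y; simp only [hG, Sum.elim_inr]; ring
      rw [heq]
      exact (((hw2 i i').sub (hw1 i)).sub (hw1 i')).add (integrable_const 1)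
  -- integral values
  have hFmean : ∀ k q, ∫ x, F k q x ∂μ = 0 := by
    rintro k (i | ⟨i, j⟩)
    · simp only [hF, Sum.elim_inl]
      rw [integral_const_mul, hemean i, mul_zero]
    · simp only [hF, Sum.elim_inr]
      rw [integral_const_mul, hemean j, mul_zero]
  have hGmean : ∀ q, ∫ y, G q y ∂ν = Sum.elim (fun _ => (1:ℝ)) (fun _ => (0:ℝ)) q := by
    rintro (i | ⟨i, j⟩)
    · simp [hG]
    · simp only [hG, Sum.elim_inl, Sum.elim_inr]
      rw [integral_sub (hw1 i) (integrable_const 1), hwmean i]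
      simp
  have hEE : ∀ (c c' : ℝ) (i j : Fin n),
      ∫ x, (c * e x i) * (c' * e x j) ∂μ = c * c' * (if i = j then σ ^ 2 else 0) := by
    intro c c' i j
    have heq : (fun x => (c * e x i) * (c' * e x j))
        = fun x => (c * c') * (e x i * e x j) := by funext x; ring
    rw [heq, integral_const_mul, hecov i j]
  have hG11 : ∫ (_ : Ω₂), (1 : ℝ) * 1 ∂ν = 1 := by simp
  have hG1w : ∀ i, ∫ y, (1 : ℝ) * (w y i - 1) ∂ν = 0 := by
    intro i
    simp only [one_mul]
    rw [integral_sub (hw1 i) (integrable_const 1), hwmean i]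
    simp
  have hGw1 : ∀ i, ∫ y, (w y i - 1) * (1 : ℝ) ∂ν = 0 := by
    intro i
    simp only [mul_one]
    rw [integral_sub (hw1 i) (integrable_const 1), hwmean i]
    simp
  constructor
  · -- mean
    intro k
    have hmono : ∀ ω : Ω₁ × Ω₂, bL ω k = b₀ k + ∑ q, F k q ω.1 * G q ω.2 := by
      intro ω
      rw [← hbL2 ω k]; ring
    calc ∫ ω, bL ω k ∂(μ.prod ν)
        = ∫ ω, (b₀ k + ∑ q, F k q ω.1 * G q ω.2) ∂(μ.prod ν) :=
          integral_congr_ae (Filter.Eventually.of_forall hmono)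
      _ = b₀ k := by
          rw [integral_add (integrable_const _)
            (integrable_finset_sum _ fun q _ => (hFint k q).mul_prod (hGint q)),
            aux_sum_integral _ _ (hFint k) hGint]
          simp [hFmean]
  · -- covariance
    intro k l
    have hre : ∀ ω : Ω₁ × Ω₂, (bL ω k - b₀ k) * (bL ω l - b₀ l)
        = ∑ qq : (Fin n ⊕ Fin n × Fin n) × (Fin n ⊕ Fin n × Fin n),
            F k qq.1 ω.1 * F l qq.2 ω.1 * (G qq.1 ω.2 * G qq.2 ω.2) := by
      intro ω
      rw [hbL2 ω k, hbL2 ω l, Finset.sum_mul_sum, Fintype.sum_prod_type]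
      exact Finset.sum_congr rfl fun q₁ _ => Finset.sum_congr rfl fun q₂ _ => by ring
    have key := aux_sum_integral (μ := μ) (ν := ν)
      (ι := (Fin n ⊕ Fin n × Fin n) × (Fin n ⊕ Fin n × Fin n))
      (fun qq x => F k qq.1 x * F l qq.2 x) (fun qq y => G qq.1 y * G qq.2 y)
      (fun qq => hFFint k l qq.1 qq.2) (fun qq => hGGint qq.1 qq.2)
    calc ∫ ω, (bL ω k - b₀ k) * (bL ω l - b₀ l) ∂(μ.prod ν)
        = ∑ qq : (Fin n ⊕ Fin n × Fin n) × (Fin n ⊕ Fin n × Fin n),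
            (∫ x, F k qq.1 x * F l qq.2 x ∂μ) * (∫ y, G qq.1 y * G qq.2 y ∂ν) := by
          rw [← key]
          exact integral_congr_ae (Filter.Eventually.of_forall hre)
      _ = _ := by
          rw [Fintype.sum_prod_type]
          simp only [Fintype.sum_sum_type]
          simp only [hF, hG, Sum.elim_inl, Sum.elim_inr]
          simp only [hEE, hG11, hG1w, hGw1, hwcov, mul_one, mul_zero,
            Finset.sum_const_zero, add_zero, zero_add]
          have hν1 : ∫ (_ : Ω₂), (1 : ℝ) ∂ν = 1 := by simp
          have hνw : ∀ i, ∫ y, (w y i - 1) ∂ν = 0 := by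
            intro i
            rw [integral_sub (hw1 i) (integrable_const 1), hwmean i]
            simp
          simp only [hν1, hνw, mul_one, mul_zero, Finset.sum_const_zero, add_zero, zero_add]
          -- now pure algebra
          have hS1 : ∑ i : Fin n, ∑ i' : Fin n,
              (A k i * A l i' * if i = i' then σ ^ 2 else 0)
              = σ ^ 2 * ∑ i, A k i * A l i := by
            simp only [mul_ite, mul_zero, Finset.sum_ite_eq, Finset.mem_univ, if_true]
            rw [Finset.mul_sum]
            exact Finset.sum_congr rfl fun i _ => by ring
          have hAHAT0 : ∑ i : Fin n, ∑ i' : Fin n, A k i * A l i' * H i i' = 0 := by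
            have h0 : (A * H * Aᵀ) k l = 0 := by rw [hAH, Matrix.zero_mul, Matrix.zero_apply]
            rw [Matrix.mul_apply] at h0
            simp only [Matrix.mul_apply, Matrix.transpose_apply, Finset.sum_mul] at h0
            rw [← h0, Finset.sum_comm]
            exact Finset.sum_congr rfl fun i _ => Finset.sum_congr rfl fun i' _ => by ring
          have hS4 : ∑ x : Fin n × Fin n, ∑ x₁ : Fin n × Fin n,
              (A k x.1 * H x.1 x.2 * (A l x₁.1 * H x₁.1 x₁.2) *
                if x.2 = x₁.2 then σ ^ 2 else 0) *
                ((if x.1 = x₁.1 then 1 / (↑τ * π x.1) else 0) - 1 / ↑τ)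
              = σ ^ 2 / ↑τ * ∑ i, A k i * A l i * (H i i / π i) := by
            simp only [Fintype.sum_prod_type]
            simp only [mul_ite, mul_zero, ite_mul, zero_mul,
              Finset.sum_ite_eq, Finset.mem_univ, if_true]
            simp only [mul_sub, Finset.sum_sub_distrib]
            have hD1 : ∑ i : Fin n, ∑ j : Fin n, ∑ i' : Fin n,
                A k i * H i j * (A l i' * H i' j) * σ ^ 2 *
                  (if i = i' then 1 / (↑τ * π i) else 0)
                = σ ^ 2 / ↑τ * ∑ i, A k i * A l i * (H i i / π i) := by
              simp only [mul_ite, mul_zero, Finset.sum_ite_eq, Finset.mem_univ, if_true]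
              rw [Finset.mul_sum]
              refine Finset.sum_congr rfl fun i _ => ?_
              calc ∑ j, A k i * H i j * (A l i * H i j) * σ ^ 2 * (1 / (↑τ * π i))
                  = (A k i * A l i * σ ^ 2 * (1 / (↑τ * π i))) * ∑ j, H i j * H i j := by
                    rw [Finset.mul_sum]
                    exact Finset.sum_congr rfl fun j _ => by ring
                _ = σ ^ 2 / ↑τ * (A k i * A l i * (H i i / π i)) := by
                    rw [hHe i i]
                    simp only [div_eq_mul_inv, mul_inv, one_mul]
                    ring
            have hD2 : ∑ i : Fin n, ∑ j : Fin n, ∑ i' : Fin n,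
                A k i * H i j * (A l i' * H i' j) * σ ^ 2 * (1 / ↑τ)
                = 0 := by
              calc ∑ i : Fin n, ∑ j : Fin n, ∑ i' : Fin n,
                  A k i * H i j * (A l i' * H i' j) * σ ^ 2 * (1 / ↑τ)
                  = ∑ i : Fin n, ∑ i' : Fin n,
                      (A k i * A l i' * H i i') * (σ ^ 2 * (1 / ↑τ)) := by
                    refine Finset.sum_congr rfl fun i _ => ?_
                    rw [Finset.sum_comm]
                    refine Finset.sum_congr rfl fun i' _ => ?_
                    calc ∑ j, A k i * H i j * (A l i' * H i' j) * σ ^ 2 * (1 / ↑τ)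
                        = (A k i * A l i' * (σ ^ 2 * (1 / ↑τ))) * ∑ j, H i j * H i' j := by
                          rw [Finset.mul_sum]
                          exact Finset.sum_congr rfl fun j _ => by ring
                      _ = (A k i * A l i' * H i i') * (σ ^ 2 * (1 / ↑τ)) := by
                          rw [hHe i i']; ring
                _ = 0 := by
                    simp only [← Finset.sum_mul]
                    rw [hAHAT0, zero_mul]
            rw [hD1, hD2, sub_zero]
          have hinv_entry : (Xᵀ * X)⁻¹ k l = ∑ i, A k i * A l i := by
            rw [← hAAT, Matrix.mul_apply]
            exact Finset.sum_congr rfl fun i _ => by rw [Matrix.transpose_apply]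
          have hd : ∀ i, ((1 : ℝ) - X i ⬝ᵥ (Xᵀ * X)⁻¹ *ᵥ X i) = H i i := by
            intro i
            rw [hH, Matrix.sub_apply, Matrix.one_apply_eq]
            simp [Matrix.mul_apply, Matrix.mulVec, dotProduct,
              Matrix.transpose_apply, hA]
          have hsecond : ((A * Matrix.diagonal fun i =>
              ((1 : ℝ) - X i ⬝ᵥ (Xᵀ * X)⁻¹ *ᵥ X i) / π i) * X * (Xᵀ * X)⁻¹) k l
              = ∑ i, A k i * A l i * (H i i / π i) := by
            rw [Matrix.mul_assoc, ← hAT, Matrix.mul_apply]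
            simp only [Matrix.mul_diagonal, Matrix.transpose_apply]
            refine Finset.sum_congr rfl fun i _ => ?_
            rw [hd i]; ring
          rw [hS1, hS4, Matrix.add_apply, Matrix.smul_apply, Matrix.smul_apply,
            hinv_entry, hsecond, smul_eq_mul, smul_eq_mul]
end
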